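/- arXiv:2105.07641 — 2 statements merged into one kernel-verified Lean document; each statement's English description precedes it below -/
import Mathlib

section
/- Let B = A + τ r rᵀ with A an n×n symmetric matrix, r ∈ ℝⁿ, τ ∈ ℝ, and suppose z ∈ ℂ with both B − zI and A − zI invertible and 1 + τ rᵀ(A−zI)⁻¹r ≠ 0. Then tr((B−zI)⁻¹) − tr((A−zI)⁻¹) = −τ rᵀ(A−zI)⁻² r / (1 + τ rᵀ(A−zI)⁻¹ r). -/
/-!
By the Sherman–Morrison formula, `(M + c u vᵀ)⁻¹ = M⁻¹ - c M⁻¹ u vᵀ M⁻¹ / (1 + c vᵀ M⁻¹ u)`, and by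
cyclicity of the trace `tr (M⁻¹ u vᵀ M⁻¹) = vᵀ M⁻² u`. Take `M = A - z I`, `c = τ`, `u = v = r`.
-/

open Matrix

namespace Matrix

section CommRing

variable {n R : Type*} [Fintype n] [CommRing R]

theorem vecMulVec_mul_mul_vecMulVec (u v w x : n → R) (N : Matrix n n R) :
    vecMulVec u v * N * vecMulVec w x = (v ⬝ᵥ N *ᵥ w) • vecMulVec u x := by
  rw [vecMulVec_mul, vecMulVec_mul_vecMulVec, vecMulVec_smul, dotProduct_mulVec]

theorem trace_mul_vecMulVec_mul (N P : Matrix n n R) (u v : n → R) :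
    trace (N * vecMulVec u v * P) = v ⬝ᵥ (P * N) *ᵥ u := by
  rw [trace_mul_comm, ← Matrix.mul_assoc, mul_vecMulVec, trace_vecMulVec, dotProduct_comm]

end CommRing

variable {n K : Type*} [Fintype n] [DecidableEq n] [Field K]

/-- The **Sherman–Morrison formula**. -/
theorem inv_add_smul_vecMulVec (M : Matrix n n K) (hM : IsUnit M.det) (c : K) (u v : n → K)
    (h : 1 + c * (v ⬝ᵥ M⁻¹ *ᵥ u) ≠ 0) :
    (M + c • vecMulVec u v)⁻¹
      = M⁻¹ - (c / (1 + c * (v ⬝ᵥ M⁻¹ *ᵥ u))) • (M⁻¹ * vecMulVec u v * M⁻¹) := by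
  refine inv_eq_right_inv ?_
  set d := v ⬝ᵥ M⁻¹ *ᵥ u
  set k := c / (1 + c * d)
  have hk : c - k - c * k * d = 0 := by
    simp only [k]; field_simp; ring
  have hMM : M * M⁻¹ = 1 := mul_nonsing_inv M hM
  calc (M + c • vecMulVec u v) * (M⁻¹ - k • (M⁻¹ * vecMulVec u v * M⁻¹))
      = 1 + (c - k - c * k * d) • (vecMulVec u v * M⁻¹) := by
        simp only [Matrix.add_mul, Matrix.mul_sub, Matrix.mul_smul, Matrix.smul_mul, hMM,
          ← Matrix.mul_assoc, Matrix.one_mul, vecMulVec_mul_mul_vecMulVec]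
        module
    _ = 1 := by rw [hk, zero_smul, add_zero]

theorem trace_inv_add_smul_vecMulVec_sub (M : Matrix n n K) (hM : IsUnit M.det) (c : K)
    (u v : n → K) (h : 1 + c * (v ⬝ᵥ M⁻¹ *ᵥ u) ≠ 0) :
    trace (M + c • vecMulVec u v)⁻¹ - trace M⁻¹
      = -c * (v ⬝ᵥ (M⁻¹ ^ 2) *ᵥ u) / (1 + c * (v ⬝ᵥ M⁻¹ *ᵥ u)) := by
  rw [inv_add_smul_vecMulVec M hM c u v h, trace_sub, trace_smul, trace_mul_vecMulVec_mul, ← sq,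
    sub_sub_cancel_left, smul_eq_mul, div_mul_eq_mul_div, neg_mul, neg_div]

end Matrix

theorem stmt3_general {n : ℕ} (A B : Matrix (Fin n) (Fin n) ℝ)
    (r : Fin n → ℝ) (τ : ℝ) (z : ℂ)
    (hB : B = A + τ • Matrix.vecMulVec r r)
    (hAz : IsUnit (A.map Complex.ofReal - z • 1).det)
    (hden : 1 + (τ : ℂ) *
        ((fun i => (r i : ℂ)) ⬝ᵥ ((A.map Complex.ofReal - z • 1)⁻¹).mulVec (fun i => (r i : ℂ)))
        ≠ 0) :
    ((B.map Complex.ofReal - z • 1)⁻¹).trace - ((A.map Complex.ofReal - z • 1)⁻¹).trace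
      = - (τ : ℂ) *
          ((fun i => (r i : ℂ)) ⬝ᵥ (((A.map Complex.ofReal - z • 1)⁻¹) ^ 2).mulVec
            (fun i => (r i : ℂ)))
        / (1 + (τ : ℂ) *
            ((fun i => (r i : ℂ)) ⬝ᵥ ((A.map Complex.ofReal - z • 1)⁻¹).mulVec
              (fun i => (r i : ℂ)))) := by
  have hBM : B.map Complex.ofReal - z • 1
      = A.map Complex.ofReal - z • 1
        + (τ : ℂ) • vecMulVec (fun i => (r i : ℂ)) (fun i => (r i : ℂ)) := by
    ext i j
    simp only [hB, Matrix.sub_apply, map_apply, Matrix.add_apply, Matrix.smul_apply,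
      vecMulVec_apply, smul_eq_mul, Complex.ofReal_add, Complex.ofReal_mul, Complex.coe_smul,
      Complex.real_smul]
    ring
  rw [hBM]
  exact trace_inv_add_smul_vecMulVec_sub _ hAz _ _ _ hden

/-- Rank-one update formula for the trace of the resolvent: if `B = A + τ r rᵀ` with `A`
symmetric, `z` not an eigenvalue of `A` nor of `B`, and `1 + τ rᵀ(A−zI)⁻¹r ≠ 0`, then
`tr((B−zI)⁻¹) − tr((A−zI)⁻¹) = −τ rᵀ(A−zI)⁻² r / (1 + τ rᵀ(A−zI)⁻¹ r)`. -/
theorem stmt3 {n : ℕ} (A B : Matrix (Fin n) (Fin n) ℝ) (hAs : A.IsSymm)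
    (r : Fin n → ℝ) (τ : ℝ) (z : ℂ)
    (hB : B = A + τ • Matrix.vecMulVec r r)
    (hAz : IsUnit (A.map Complex.ofReal - z • 1).det)
    (hBz : IsUnit (B.map Complex.ofReal - z • 1).det)
    (hden : 1 + (τ : ℂ) *
        ((fun i => (r i : ℂ)) ⬝ᵥ ((A.map Complex.ofReal - z • 1)⁻¹).mulVec (fun i => (r i : ℂ)))
        ≠ 0) :
    ((B.map Complex.ofReal - z • 1)⁻¹).trace - ((A.map Complex.ofReal - z • 1)⁻¹).trace
      = - (τ : ℂ) *
          ((fun i => (r i : ℂ)) ⬝ᵥ (((A.map Complex.ofReal - z • 1)⁻¹) ^ 2).mulVec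
            (fun i => (r i : ℂ)))
        / (1 + (τ : ℂ) *
            ((fun i => (r i : ℂ)) ⬝ᵥ ((A.map Complex.ofReal - z • 1)⁻¹).mulVec
              (fun i => (r i : ℂ)))) :=
  stmt3_general A B r τ z hB hAz hden
end

section
/- For any eigenvalue-counting (spectral) distributions: let A and B be n×n Hermitian matrices and F^A, F^B their empirical spectral distribution functions. Then the Kolmogorov (sup-norm) distance satisfies ‖F^A − F^B‖_∞ ≤ rank(A − B)/n. -/
open Matrix Module Submodule Finset
open scoped InnerProductSpace

/-!
Let `V` be the span of the eigenvectors of `A` with eigenvalue `≤ x`, `W` the span of the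
eigenvectors of `B` with eigenvalue `> x`, and `K` the kernel of `A - B`. On `V` the quadratic
form of `A` is at most `x‖v‖²`, on `W \ {0}` that of `B` exceeds `x‖v‖²`, and on `K` the two
forms agree, so `V ⊓ K ⊓ W = 0`. Counting dimensions,
`#{λᴬ ≤ x} + (n - rank (A - B)) + #{λᴮ > x} ≤ 2n`, i.e.
`#{λᴬ ≤ x} ≤ #{λᴮ ≤ x} + rank (A - B)`; exchanging `A` and `B` bounds the absolute difference.
-/

variable {𝕜 : Type*} [RCLike 𝕜]

namespace OrthonormalBasis

variable {ι E : Type*} [Fintype ι] [NormedAddCommGroup E] [InnerProductSpace 𝕜 E]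
  (b : OrthonormalBasis ι 𝕜 E)

theorem repr_apply_eq_zero_of_mem_span_image {s : Set ι} {v : E} (hv : v ∈ span 𝕜 (b '' s))
    {j : ι} (hj : j ∉ s) : b.repr v j = 0 := by
  rw [← b.coe_toBasis, b.toBasis.mem_span_image] at hv
  rw [← b.coe_toBasis_repr_apply]
  by_contra h
  exact hj (hv (Finsupp.mem_support_iff.2 h))

theorem finrank_span_image (s : Finset ι) : finrank 𝕜 (span 𝕜 (b '' s)) = #s := by
  rw [Set.image_eq_range]
  exact (finrank_span_eq_card (b.orthonormal.linearIndependent.comp _ Subtype.val_injective)).trans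
    (by simp)

theorem norm_sq_eq_sum_norm_sq_repr (v : E) : ‖v‖ ^ 2 = ∑ j, ‖b.repr v j‖ ^ 2 := by
  rw [← b.repr.norm_map, EuclideanSpace.norm_sq_eq]

end OrthonormalBasis

theorem Matrix.rank_neg {m n R : Type*} [Fintype n] [CommRing R] (M : Matrix m n R) :
    (-M).rank = M.rank := by
  have : (-M).mulVecLin = -M.mulVecLin := by ext; simp
  rw [Matrix.rank, this, LinearMap.range_neg, Matrix.rank]

theorem Matrix.finrank_ker_toEuclideanLin_add_rank {m n : Type*} [Fintype m] [Fintype n]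
    [DecidableEq n] (M : Matrix m n 𝕜) :
    finrank 𝕜 (LinearMap.ker (toEuclideanLin M)) + M.rank = Fintype.card n := by
  rw [M.rank_eq_finrank_range_toLin (PiLp.basisFun 2 𝕜 m) (PiLp.basisFun 2 𝕜 n),
    ← toLpLin_eq_toLin, add_comm, LinearMap.finrank_range_add_finrank_ker, finrank_euclideanSpace]

namespace Matrix.IsHermitian

variable {n : Type*} [Fintype n] [DecidableEq n] {M : Matrix n n 𝕜} (hM : M.IsHermitian)

theorem eigenvectorBasis_repr_toEuclideanLin (v : EuclideanSpace 𝕜 n) (j : n) :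
    hM.eigenvectorBasis.repr (toEuclideanLin M v) j =
      hM.eigenvalues j * hM.eigenvectorBasis.repr v j := by
  have hb : toEuclideanLin M (hM.eigenvectorBasis j) =
      (hM.eigenvalues j : 𝕜) • hM.eigenvectorBasis j := by
    ext i
    simpa [toLpLin_apply] using congrFun (hM.mulVec_eigenvectorBasis j) i
  rw [OrthonormalBasis.repr_apply_apply, OrthonormalBasis.repr_apply_apply,
    ← (isSymmetric_toEuclideanLin_iff.2 hM), hb, inner_smul_left, RCLike.conj_ofReal]

theorem re_inner_toEuclideanLin_self (v : EuclideanSpace 𝕜 n) :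
    RCLike.re ⟪v, toEuclideanLin M v⟫_𝕜 =
      ∑ j, hM.eigenvalues j * ‖hM.eigenvectorBasis.repr v j‖ ^ 2 := by
  rw [← hM.eigenvectorBasis.repr.inner_map_map, PiLp.inner_apply, map_sum]
  refine Finset.sum_congr rfl fun j _ => ?_
  rw [eigenvectorBasis_repr_toEuclideanLin, ← smul_eq_mul, inner_smul_real_right, RCLike.smul_re,
    inner_self_eq_norm_sq]

theorem re_inner_toEuclideanLin_self_le {x : ℝ} {v : EuclideanSpace 𝕜 n}
    (hv : v ∈ span 𝕜 (hM.eigenvectorBasis '' {j | hM.eigenvalues j ≤ x})) :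
    RCLike.re ⟪v, toEuclideanLin M v⟫_𝕜 ≤ x * ‖v‖ ^ 2 := by
  rw [hM.re_inner_toEuclideanLin_self, hM.eigenvectorBasis.norm_sq_eq_sum_norm_sq_repr, mul_sum]
  refine sum_le_sum fun j _ => ?_
  by_cases hj : hM.eigenvalues j ≤ x
  · gcongr
  · simp [hM.eigenvectorBasis.repr_apply_eq_zero_of_mem_span_image hv hj]

theorem lt_re_inner_toEuclideanLin_self {x : ℝ} {v : EuclideanSpace 𝕜 n}
    (hv : v ∈ span 𝕜 (hM.eigenvectorBasis '' {j | x < hM.eigenvalues j})) (hv₀ : v ≠ 0) :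
    x * ‖v‖ ^ 2 < RCLike.re ⟪v, toEuclideanLin M v⟫_𝕜 := by
  have hrepr (j : n) (hj : ¬x < hM.eigenvalues j) : hM.eigenvectorBasis.repr v j = 0 :=
    hM.eigenvectorBasis.repr_apply_eq_zero_of_mem_span_image hv hj
  obtain ⟨j₀, hj₀⟩ : ∃ j, hM.eigenvectorBasis.repr v j ≠ 0 := by
    by_contra! h
    exact hv₀ (hM.eigenvectorBasis.repr.map_eq_zero_iff.1 (PiLp.ext h))
  rw [hM.re_inner_toEuclideanLin_self, hM.eigenvectorBasis.norm_sq_eq_sum_norm_sq_repr, mul_sum]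
  refine sum_lt_sum (fun j _ => ?_) ⟨j₀, mem_univ j₀, ?_⟩
  · by_cases hj : x < hM.eigenvalues j
    · gcongr
    · simp [hrepr j hj]
  · have hx : x < hM.eigenvalues j₀ := by_contra fun h => hj₀ (hrepr j₀ h)
    gcongr

end Matrix.IsHermitian

theorem card_eigenvalues_le_le_card_add_rank {n : Type*} [Fintype n] [DecidableEq n]
    {A B : Matrix n n 𝕜} (hA : A.IsHermitian) (hB : B.IsHermitian) (x : ℝ) :
    #{j | hA.eigenvalues j ≤ x} ≤ #{j | hB.eigenvalues j ≤ x} + (A - B).rank := by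
  set V := span 𝕜 (hA.eigenvectorBasis '' {j | hA.eigenvalues j ≤ x})
  set W := span 𝕜 (hB.eigenvectorBasis '' {j | x < hB.eigenvalues j})
  set K := LinearMap.ker (toEuclideanLin (A - B))
  have hdisj : Disjoint (V ⊓ K) W := by
    refine disjoint_def.2 fun v hvVK hvW => ?_
    obtain ⟨hvV, hvK⟩ := mem_inf.1 hvVK
    by_contra hv₀
    have hAB : toEuclideanLin A v = toEuclideanLin B v := by
      rwa [LinearMap.mem_ker, map_sub, LinearMap.sub_apply, sub_eq_zero] at hvK
    have hle := hA.re_inner_toEuclideanLin_self_le hvV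
    have hlt := hB.lt_re_inner_toEuclideanLin_self hvW hv₀
    rw [hAB] at hle
    linarith
  have hV : finrank 𝕜 V = #{j | hA.eigenvalues j ≤ x} := by
    rw [← hA.eigenvectorBasis.finrank_span_image, coe_filter_univ]
  have hW : finrank 𝕜 W = #{j | x < hB.eigenvalues j} := by
    rw [← hB.eigenvectorBasis.finrank_span_image, coe_filter_univ]
  have hK : finrank 𝕜 K + (A - B).rank = Fintype.card n :=
    (A - B).finrank_ker_toEuclideanLin_add_rank
  have hcompl : #{j | hB.eigenvalues j ≤ x} + #{j | x < hB.eigenvalues j} = Fintype.card n := by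
    simpa only [not_le, card_univ] using
      card_filter_add_card_filter_not (s := univ) fun j => hB.eigenvalues j ≤ x
  have hVK := finrank_sup_add_finrank_inf_eq V K
  have hVK_le := (V ⊔ K).finrank_le
  have hdisj_le := finrank_add_finrank_le_of_disjoint hdisj
  have hdim : finrank 𝕜 (EuclideanSpace 𝕜 n) = Fintype.card n := finrank_euclideanSpace
  omega

theorem stmt4_general {n : ℕ} (A B : Matrix (Fin n) (Fin n) ℂ)
    (hA : A.IsHermitian) (hB : B.IsHermitian) (x : ℝ) :
    |((Finset.univ.filter fun j => hA.eigenvalues j ≤ x).card : ℝ) / n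
      - ((Finset.univ.filter fun j => hB.eigenvalues j ≤ x).card : ℝ) / n|
      ≤ ((A - B).rank : ℝ) / n := by
  have hAB := card_eigenvalues_le_le_card_add_rank hA hB x
  have hBA := card_eigenvalues_le_le_card_add_rank hB hA x
  rw [← neg_sub, rank_neg] at hBA
  rw [← sub_div, abs_div, Nat.abs_cast]
  gcongr
  rw [abs_sub_le_iff, sub_le_iff_le_add', sub_le_iff_le_add']
  exact ⟨mod_cast hAB, mod_cast hBA⟩

/-- Bai–Silverstein rank inequality: the Kolmogorov distance between the empirical
spectral distribution functions of two Hermitian matrices `A`, `B` is bounded by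
`rank(A − B)/n`. -/
theorem stmt4 {n : ℕ} (hn : 0 < n) (A B : Matrix (Fin n) (Fin n) ℂ)
    (hA : A.IsHermitian) (hB : B.IsHermitian) (x : ℝ) :
    |((Finset.univ.filter fun j => hA.eigenvalues j ≤ x).card : ℝ) / n
      - ((Finset.univ.filter fun j => hB.eigenvalues j ≤ x).card : ℝ) / n|
      ≤ ((A - B).rank : ℝ) / n :=
  stmt4_general A B hA hB x
end
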